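/- Let K be a skew-field, κ an infinite cardinal, and R the endomorphism ring of a κ-dimensional left K-vector space. Then every ≤κ-generated R-projective right R-module is projective. -/

import Mathlib

/-!
Since `dim V = κ` is infinite, `V ≅ V^(κ)`; the projections `ψ i` onto the copies of `V` and the
inclusions `φ j` of them satisfy `ψ i * φ j = δ i j`, so the `ψ i` span a free left ideal
`Φ : R^(κ) ↪ R` of `R = End V`. Present a `≤ κ`-generated `M` as `q : R^(κ) ↠ M`. Then
`M ≅ R^(κ) / ker q` embeds into `R / Φ (ker q)`, and an `R`-projective lift `g : M → R` of this
embedding takes values in `Φ (R^(κ)) + Φ (ker q) = Φ (R^(κ))`, so `Φ⁻¹ ∘ g` splits `q`.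
-/

universe u

def IsRProjective (R : Type u) [Ring R] (M : Type u) [AddCommGroup M] [Module R M] : Prop :=
  ∀ (I : Submodule R R) (f : M →ₗ[R] R ⧸ I), ∃ g : M →ₗ[R] R, I.mkQ.comp g = f

open Cardinal Function

theorem Cardinal.nonempty_prod_self_equiv {α : Type*} [Infinite α] : Nonempty (α × α ≃ α) := by
  rw [← Cardinal.eq, mk_prod, lift_id]
  exact mul_eq_self (aleph0_le_mk α)

theorem linearIndependent_of_mul_eq_zero_one {R ι : Type*} [Ring R] {ψ φ : ι → R}
    (h₀ : Pairwise fun i j ↦ ψ i * φ j = 0) (h₁ : ∀ i, ψ i * φ i = 1) :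
    LinearIndependent R ψ :=
  .of_pairwise_dual_eq_zero_one ψ (fun i ↦ LinearMap.mulRight R (φ i))
    (fun _ _ hij ↦ h₀ hij.symm) h₁

theorem Module.Basis.exists_linearIndependent_end {ι K V : Type*} [Ring K] [AddCommGroup V]
    [Module K V] (b : Basis ι K V) (e : ι × ι ≃ ι) :
    ∃ ψ : ι → Module.End K V, LinearIndependent (Module.End K V) ψ := by
  classical
  -- `φ j` maps `V` onto the `j`-th copy `span (b (e (j, ·)))` of `V` in `V`, `ψ i` projects onto
  -- the `i`-th copy.
  let φ : ι → Module.End K V := fun j ↦ b.constr ℕ fun l ↦ b (e (j, l))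
  let ψ : ι → Module.End K V := fun i ↦
    b.constr ℕ fun k ↦ if (e.symm k).1 = i then b (e.symm k).2 else 0
  have hψφ : ∀ i j, ψ i * φ j = if j = i then 1 else 0 := by
    intro i j
    refine b.ext fun l ↦ ?_
    simp only [ψ, φ, Module.End.mul_apply, b.constr_basis, Equiv.symm_apply_apply]
    split_ifs <;> simp
  refine ⟨ψ, linearIndependent_of_mul_eq_zero_one (φ := φ) (fun i j hij ↦ ?_) fun i ↦ ?_⟩
  · simp [hψφ, Ne.symm hij]
  · simp [hψφ]

theorem exists_surjective_finsupp_of_span_eq_top {R M ι : Type*} [Semiring R] [AddCommMonoid M]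
    [Module R M] {S : Set M} (hS : Submodule.span R S = ⊤) (emb : S ↪ ι) :
    ∃ q : (ι →₀ R) →ₗ[R] M, Surjective q := by
  let v : ι → M := extend emb Subtype.val 0
  have hSv : S ⊆ Set.range v := fun s hs ↦ ⟨emb ⟨s, hs⟩, emb.injective.extend_apply _ _ _⟩
  refine ⟨Finsupp.linearCombination R v, ?_⟩
  rw [← LinearMap.range_eq_top, Finsupp.range_linearCombination, eq_top_iff, ← hS]
  exact Submodule.span_mono hSv

theorem IsRProjective.exists_comp_eq_id {R M : Type u} {F : Type*} [Ring R] [AddCommGroup M]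
    [Module R M] [AddCommGroup F] [Module R F] (hM : IsRProjective R M) {Φ : F →ₗ[R] R}
    (hΦ : Injective Φ) {q : F →ₗ[R] M} (hq : Surjective q) :
    ∃ s : M →ₗ[R] F, q ∘ₗ s = LinearMap.id := by
  let I : Submodule R R := (LinearMap.ker q).map Φ
  let f : M →ₗ[R] R ⧸ I := (LinearMap.ker q).mapQ I Φ (fun x hx ↦ ⟨x, hx, rfl⟩) ∘ₗ
    (q.quotKerEquivOfSurjective hq).symm.toLinearMap
  have hf : ∀ x, f (q x) = I.mkQ (Φ x) := fun x ↦ by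
    simp only [f, LinearMap.comp_apply, LinearEquiv.coe_coe,
      LinearMap.quotKerEquivOfSurjective_symm_apply]
    rfl
  obtain ⟨g, hg⟩ := hM I f
  have hgq : ∀ x, ∃ n ∈ LinearMap.ker q, g (q x) = Φ (x + n) := fun x ↦ by
    have : I.mkQ (g (q x)) = I.mkQ (Φ x) := by rw [← hf, ← hg]; rfl
    obtain ⟨n, hn, hΦn⟩ := (Submodule.Quotient.eq I).mp this
    exact ⟨n, hn, by rw [map_add, hΦn, add_sub_cancel]⟩
  have hg_range : ∀ m, g m ∈ LinearMap.range Φ := fun m ↦ by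
    obtain ⟨x, rfl⟩ := hq m
    obtain ⟨n, -, hn⟩ := hgq x
    exact ⟨x + n, hn.symm⟩
  let s := (LinearEquiv.ofInjective Φ hΦ).symm.toLinearMap ∘ₗ g.codRestrict _ hg_range
  refine ⟨s, LinearMap.ext fun m ↦ ?_⟩
  obtain ⟨x, rfl⟩ := hq m
  obtain ⟨n, hn, hgn⟩ := hgq x
  have : s (q x) = x + n := hΦ <| by simp [s, hgn]
  simp [this, LinearMap.mem_ker.mp hn]

theorem IsRProjective.projective_of_injective {R M : Type u} {F : Type*} [Ring R]
    [AddCommGroup M] [Module R M] [AddCommGroup F] [Module R F] [Module.Projective R F]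
    (hM : IsRProjective R M) {Φ : F →ₗ[R] R} (hΦ : Injective Φ) {q : F →ₗ[R] M}
    (hq : Surjective q) : Module.Projective R M :=
  let ⟨s, hs⟩ := hM.exists_comp_eq_id hΦ hq
  .of_split s q hs

/-- If `K` is a skew-field and `R` the endomorphism ring of a `κ`-dimensional `K`-vector space
(`κ` infinite), then every `≤ κ`-generated `R`-projective module is projective. -/
theorem rProjective_le_kappa_generated_projective
    (K : Type u) [DivisionRing K] (V : Type u) [AddCommGroup V] [Module K V]
    (κ : Cardinal.{u}) (hκ : Cardinal.aleph0 ≤ κ) (hrank : Module.rank K V = κ)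
    (M : Type u) [AddCommGroup M] [Module (Module.End K V) M]
    (hgen : ∃ S : Set M, Cardinal.mk S ≤ κ ∧ Submodule.span (Module.End K V) S = ⊤)
    (hproj : IsRProjective (Module.End K V) M) :
    Module.Projective (Module.End K V) M := by
  obtain ⟨S, hScard, hSspan⟩ := hgen
  let ι := Module.Basis.ofVectorSpaceIndex K V
  let b : Module.Basis ι K V := .ofVectorSpace K V
  have hι : #ι = κ := by rw [b.mk_eq_rank'', hrank]
  have : Infinite ι := by rw [← aleph0_le_mk_iff, hι]; exact hκ
  obtain ⟨e⟩ : Nonempty (ι × ι ≃ ι) := Cardinal.nonempty_prod_self_equiv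
  obtain ⟨ψ, hψ⟩ := b.exists_linearIndependent_end e
  obtain ⟨emb⟩ : Nonempty (S ↪ ι) := by rw [← le_def, hι]; exact hScard
  obtain ⟨q, hq⟩ := exists_surjective_finsupp_of_span_eq_top hSspan emb
  exact hproj.projective_of_injective hψ hq
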